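/- arXiv:2108.02993 — 3 statements merged into one kernel-verified Lean document; each statement's English description precedes it below -/
import Mathlib

section
/- Let U be a full set of words of size m over the alphabet {1,...,p}, i.e. an admissible set such that whenever a word belongs to U, every subword of it belongs to U. Then for all holomorphic functions g, f_0, ..., f_m on ℂ^p, the pure generalized Wronskian satisfies W_U(g·f_0, ..., g·f_m) = g^{m+1} · W_U(f_0, ..., f_m). -/
set_option maxHeartbeats 1000000
set_option synthInstance.maxHeartbeats 1000000


/-- The partial derivative `∂/∂z_i` of a function on `ℂ^p`. -/
noncomputable def pd {p : ℕ} (i : Fin p) (f : (Fin p → ℂ) → ℂ) : (Fin p → ℂ) → ℂ :=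
  fun z => fderiv ℂ f z (Pi.single i 1)

/-- The iterated partial derivative `∂^α` associated to a multi-index `α : Fin p → ℕ`. -/
noncomputable def mpd {p : ℕ} (α : Fin p → ℕ) (f : (Fin p → ℂ) → ℂ) : (Fin p → ℂ) → ℂ :=
  ((List.ofFn fun i : Fin p => (pd i)^[α i]).foldr (· ∘ ·) id) f

section Foldr

variable {E : Type*}

lemma foldr_id (l : List (E → E)) (h : ∀ g ∈ l, g = id) : l.foldr (· ∘ ·) id = id := by
  induction l with
  | nil => rfl
  | cons a l ih =>
    rw [List.foldr_cons, h a List.mem_cons_self,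
      ih fun g hg => h g (List.mem_cons_of_mem _ hg)]
    rfl

lemma foldr_split : ∀ {q : ℕ} (d : Fin q → E → E) (α : Fin q → ℕ) (i : Fin q),
    (∀ j, j < i → α j = 0) → α i ≠ 0 →
    (List.ofFn fun j => (d j)^[α j]).foldr (· ∘ ·) id
      = d i ∘ (List.ofFn fun j => (d j)^[(α - Pi.single i 1 : Fin q → ℕ) j]).foldr (· ∘ ·) id := by
  intro q
  induction q with
  | zero => intro d α i; exact i.elim0
  | succ q ih =>
    intro d α i h0 hi
    rw [List.ofFn_succ, List.ofFn_succ, List.foldr_cons, List.foldr_cons]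
    induction i using Fin.cases with
    | zero =>
      obtain ⟨n, hn⟩ := Nat.exists_eq_succ_of_ne_zero hi
      have htail : (fun j : Fin q => (d j.succ)^[(α - Pi.single (0 : Fin (q + 1)) 1 : Fin (q+1) → ℕ) j.succ])
          = fun j : Fin q => (d j.succ)^[α j.succ] := by
        funext j
        have h1 : (Pi.single (0 : Fin (q + 1)) 1 : Fin (q + 1) → ℕ) j.succ = 0 :=
          Pi.single_eq_of_ne (Fin.succ_ne_zero j) 1
        rw [Pi.sub_apply, h1, Nat.sub_zero]
      have hhead : (α - Pi.single (0 : Fin (q+1)) 1 : Fin (q+1) → ℕ) 0 = n := by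
        rw [Pi.sub_apply, Pi.single_eq_same, hn]; rfl
      rw [htail, hhead, hn, Function.iterate_succ']
      rfl
    | succ i' =>
      have h00 : α 0 = 0 := h0 0 (Fin.succ_pos i')
      have h0' : (α - Pi.single i'.succ 1 : Fin (q+1) → ℕ) 0 = 0 := by
        rw [Pi.sub_apply, h00]; rfl
      have e1 : (fun j : Fin q => (d j.succ)^[(α - Pi.single i'.succ 1 : Fin (q+1) → ℕ) j.succ])
          = fun j : Fin q => (d j.succ)^[((fun j : Fin q => α j.succ) - Pi.single i' 1 : Fin q → ℕ) j] := by
        funext j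
        rw [Pi.sub_apply, Pi.sub_apply]
        congr 2
        rcases eq_or_ne j i' with rfl | hne
        · rw [Pi.single_eq_same, Pi.single_eq_same]
        · rw [Pi.single_eq_of_ne (fun h => hne (Fin.succ_injective _ h)),
            Pi.single_eq_of_ne hne]
      rw [h0', h00, Function.iterate_zero, Function.id_comp, Function.id_comp, e1,
        ih (fun j => d j.succ) (fun j => α j.succ) i'
          (fun j hj => h0 j.succ (Fin.succ_lt_succ_iff.mpr hj)) hi]

end Foldr

lemma mpd_zero {p : ℕ} (f : (Fin p → ℂ) → ℂ) : mpd 0 f = f := by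
  unfold mpd
  rw [foldr_id]
  · rfl
  · intro g hg
    simp only [List.mem_ofFn] at hg
    obtain ⟨i, rfl⟩ := hg
    simp

lemma mpd_succ {p : ℕ} (α : Fin p → ℕ) (i : Fin p) (h0 : ∀ j, j < i → α j = 0)
    (hi : α i ≠ 0) (f : (Fin p → ℂ) → ℂ) :
    mpd α f = pd i (mpd (α - Pi.single i 1) f) := by
  unfold mpd
  rw [foldr_split pd α i h0 hi]
  rfl

/-- Induction principle on multi-indices, peeling off the first nonzero coordinate. -/
lemma multiindex_induction {p : ℕ} (P : (Fin p → ℕ) → Prop) (h0 : P 0)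
    (hstep : ∀ (α : Fin p → ℕ) (i : Fin p), α i ≠ 0 → (∀ j, j < i → α j = 0) →
      P (α - Pi.single i 1) → P α) : ∀ α, P α := by
  suffices H : ∀ (n : ℕ) (α : Fin p → ℕ), (∑ k, α k) ≤ n → P α by
    exact fun α => H (∑ k, α k) α le_rfl
  intro n
  induction n with
  | zero =>
    intro α hα
    have : α = 0 := by
      funext k
      have := Finset.sum_eq_zero_iff.mp (Nat.le_zero.mp hα) k (Finset.mem_univ k)
      simpa using this
    rwa [this]
  | succ n ih =>
    intro α hα
    rcases eq_or_ne α 0 with rfl | hne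
    · exact h0
    · have hnemp : (Finset.univ.filter fun i => α i ≠ 0).Nonempty := by
        rcases Function.ne_iff.mp hne with ⟨i, hi⟩
        exact ⟨i, Finset.mem_filter.mpr ⟨Finset.mem_univ i, by simpa using hi⟩⟩
      set i := (Finset.univ.filter fun i => α i ≠ 0).min' hnemp with hidef
      have hi : α i ≠ 0 :=
        (Finset.mem_filter.mp ((Finset.univ.filter fun i => α i ≠ 0).min'_mem hnemp)).2
      have hlt : ∀ j, j < i → α j = 0 := by
        intro j hj
        by_contra hjne
        exact absurd hj (not_lt_of_ge (Finset.min'_le _ j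
          (Finset.mem_filter.mpr ⟨Finset.mem_univ j, hjne⟩)))
      refine hstep α i hi hlt (ih _ ?_)
      have hdec : (∑ k, (α - Pi.single i 1 : Fin p → ℕ) k) < ∑ k, α k := by
        apply Finset.sum_lt_sum (fun j _ => by rw [Pi.sub_apply]; exact Nat.sub_le _ _)
        refine ⟨i, Finset.mem_univ i, ?_⟩
        rw [Pi.sub_apply, Pi.single_eq_same]
        exact Nat.sub_lt (Nat.pos_of_ne_zero hi) one_pos
      omega
open Complex Metric MeasureTheory Real intervalIntegral

section Regularity

variable {p : ℕ} {f : (Fin p → ℂ) → ℂ}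

lemma slice_hasDerivAt (hf : Differentiable ℂ f) (z v : Fin p → ℂ) (t₀ : ℂ) :
    HasDerivAt (fun t : ℂ => f (z + t • v)) (fderiv ℂ f (z + t₀ • v) v) t₀ := by
  have hinner : HasDerivAt (fun t : ℂ => z + t • v) v t₀ := by
    simpa using ((hasDerivAt_id t₀).smul_const v).const_add z
  exact (hf _).hasFDerivAt.comp_hasDerivAt t₀ hinner

lemma slice_differentiable (hf : Differentiable ℂ f) (z v : Fin p → ℂ) :
    Differentiable ℂ (fun t : ℂ => f (z + t • v)) :=
  fun t => (slice_hasDerivAt hf z v t).differentiableAt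

lemma fderiv_norm_le (hf : Differentiable ℂ f) {C : ℝ} {y : Fin p → ℂ}
    (hC : ∀ w ∈ closedBall y 1, ‖f w‖ ≤ C) : ‖fderiv ℂ f y‖ ≤ C := by
  have hC0 : 0 ≤ C := le_trans (norm_nonneg _) (hC y (mem_closedBall_self zero_le_one))
  refine ContinuousLinearMap.opNorm_le_bound _ hC0 fun v => ?_
  rcases eq_or_ne v 0 with rfl | hv
  · simp [hC0]
  · set u : Fin p → ℂ := ((‖v‖ : ℂ))⁻¹ • v with hu
    have hnu : ‖u‖ = 1 := by
      rw [hu, norm_smul, norm_inv]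
      simp [norm_ne_zero_iff.mpr hv]
    have key : ‖fderiv ℂ f y u‖ ≤ C := by
      have hg : Differentiable ℂ (fun t : ℂ => f (y + t • u)) := slice_differentiable hf y u
      have hderiv : deriv (fun t : ℂ => f (y + t • u)) 0 = fderiv ℂ f y u := by
        have := (slice_hasDerivAt hf y u 0).deriv
        simpa using this
      have hcd : Complex.cderiv 1 (fun t : ℂ => f (y + t • u)) 0
          = deriv (fun t : ℂ => f (y + t • u)) 0 :=
        Complex.cderiv_eq_deriv isOpen_univ hg.differentiableOn one_pos (Set.subset_univ _)
      have hb : ‖Complex.cderiv 1 (fun t : ℂ => f (y + t • u)) 0‖ ≤ C / 1 := by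
        refine Complex.norm_cderiv_le one_pos fun w hw => hC _ ?_
        have hw1 : ‖w‖ = 1 := by simpa using hw
        simp only [mem_closedBall, dist_eq_norm]
        rw [add_sub_cancel_left, norm_smul, hw1, hnu]
        norm_num
      rw [← hderiv, ← hcd]
      simpa using hb
    have hvu : v = (‖v‖ : ℂ) • u := by
      rw [hu, smul_smul, mul_inv_cancel₀ (by exact_mod_cast norm_ne_zero_iff.mpr hv), one_smul]
    have : ‖fderiv ℂ f y v‖ = ‖v‖ * ‖fderiv ℂ f y u‖ := by
      conv_lhs => rw [hvu]
      rw [ContinuousLinearMap.map_smul, norm_smul]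
      simp
    rw [this, mul_comm]
    exact mul_le_mul_of_nonneg_right key (norm_nonneg v)

noncomputable def phi {p : ℕ} (i : Fin p) (f : (Fin p → ℂ) → ℂ) (z : Fin p → ℂ) (θ : ℝ) : ℂ :=
  deriv (circleMap 0 1) θ •
    (((circleMap 0 1 θ) ^ 2)⁻¹ • f (z + circleMap 0 1 θ • (Pi.single i 1 : Fin p → ℂ)))

lemma pd_rep (hf : Differentiable ℂ f) (i : Fin p) (z : Fin p → ℂ) :
    pd i f z = (2 * ↑π * Complex.I)⁻¹ • ∫ θ in Set.Ioc (0:ℝ) (2*π), phi i f z θ := by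
  have hg : Differentiable ℂ (fun t : ℂ => f (z + t • (Pi.single i 1 : Fin p → ℂ))) :=
    slice_differentiable hf z _
  have h1 : pd i f z = deriv (fun t : ℂ => f (z + t • (Pi.single i 1 : Fin p → ℂ))) 0 := by
    have := (slice_hasDerivAt hf z (Pi.single i 1) 0).deriv
    rw [pd]
    simp only [zero_smul, add_zero] at this
    rw [this]
  rw [h1, ← Complex.cderiv_eq_deriv isOpen_univ hg.differentiableOn one_pos (Set.subset_univ _)]
  unfold Complex.cderiv circleIntegral
  rw [intervalIntegral.integral_of_le (by positivity)]
  congr 1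
  refine MeasureTheory.integral_congr_ae (Filter.Eventually.of_forall fun θ => ?_)
  simp [phi]

end Regularity

section Reg2

variable {p : ℕ} {f : (Fin p → ℂ) → ℂ}

lemma norm_single_one {i : Fin p} : ‖(Pi.single i 1 : Fin p → ℂ)‖ = 1 := by
  rw [Pi.norm_single]; simp

lemma pd_differentiable (hf : Differentiable ℂ f) (i : Fin p) :
    Differentiable ℂ (pd i f) := by
  intro z₀
  obtain ⟨C, hC⟩ : ∃ C, ∀ y ∈ closedBall z₀ 3, ‖f y‖ ≤ C :=
    (isCompact_closedBall z₀ 3).exists_bound_of_continuousOn hf.continuous.continuousOn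
  set F' : (Fin p → ℂ) → ℝ → ((Fin p → ℂ) →L[ℂ] ℂ) := fun z θ =>
    (deriv (circleMap 0 1) θ * ((circleMap 0 1 θ) ^ 2)⁻¹) •
      fderiv ℂ f (z + circleMap 0 1 θ • (Pi.single i 1 : Fin p → ℂ)) with hF'
  have hmem : ∀ z ∈ ball z₀ (1:ℝ), ∀ θ : ℝ,
      z + circleMap 0 1 θ • (Pi.single i 1 : Fin p → ℂ) ∈ closedBall z₀ 2 := by
    intro z hz θ
    have h1 : ‖circleMap 0 1 θ • (Pi.single i 1 : Fin p → ℂ)‖ = 1 := by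
      rw [norm_smul, norm_single_one]
      simp [norm_circleMap_zero]
    rw [mem_closedBall, dist_eq_norm]
    calc ‖z + circleMap 0 1 θ • (Pi.single i 1 : Fin p → ℂ) - z₀‖
        ≤ ‖z - z₀‖ + ‖circleMap 0 1 θ • (Pi.single i 1 : Fin p → ℂ)‖ := by
          rw [add_sub_right_comm]; exact norm_add_le _ _
      _ ≤ 1 + 1 := by
          rw [h1]
          gcongr
          exact le_of_lt (mem_ball_iff_norm.mp hz)
      _ ≤ 2 := by norm_num
  have hkernel : ∀ θ : ℝ, ‖deriv (circleMap 0 1) θ * ((circleMap 0 1 θ) ^ 2)⁻¹‖ = 1 := by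
    intro θ
    rw [norm_mul, deriv_circleMap]
    simp [norm_circleMap_zero]
  have hC0 : 0 ≤ C := le_trans (norm_nonneg _) (hC z₀ (by simp))
  have key : HasFDerivAt (fun z => ∫ θ in Set.Ioc (0:ℝ) (2*π), phi i f z θ)
      (∫ θ in Set.Ioc (0:ℝ) (2*π), F' z₀ θ) z₀ := by
    apply _root_.hasFDerivAt_integral_of_dominated_of_fderiv_le (bound := fun _ => C) (ball_mem_nhds z₀ one_pos)
    · -- hF_meas
      refine Filter.Eventually.of_forall fun z => (Continuous.aestronglyMeasurable ?_)
      have hc1 : Continuous fun θ : ℝ => deriv (circleMap 0 1) θ := by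
        have : (fun θ : ℝ => deriv (circleMap 0 1) θ) = fun θ => circleMap 0 1 θ * Complex.I :=
          funext fun θ => deriv_circleMap 0 1 θ
        rw [this]
        exact (continuous_circleMap 0 1).mul continuous_const
      have hc2 : Continuous fun θ : ℝ => ((circleMap 0 1 θ) ^ 2)⁻¹ :=
        ((continuous_circleMap 0 1).pow 2).inv₀ fun θ =>
          pow_ne_zero 2 (circleMap_ne_center one_ne_zero)
      have hc3 : Continuous fun θ : ℝ =>
          f (z + circleMap 0 1 θ • (Pi.single i 1 : Fin p → ℂ)) :=
        hf.continuous.comp (continuous_const.add ((continuous_circleMap 0 1).smul continuous_const))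
      exact hc1.smul (hc2.smul hc3)
    · -- hF_int
      apply Continuous.integrableOn_Ioc
      have hc1 : Continuous fun θ : ℝ => deriv (circleMap 0 1) θ := by
        have : (fun θ : ℝ => deriv (circleMap 0 1) θ) = fun θ => circleMap 0 1 θ * Complex.I :=
          funext fun θ => deriv_circleMap 0 1 θ
        rw [this]
        exact (continuous_circleMap 0 1).mul continuous_const
      have hc2 : Continuous fun θ : ℝ => ((circleMap 0 1 θ) ^ 2)⁻¹ :=
        ((continuous_circleMap 0 1).pow 2).inv₀ fun θ =>
          pow_ne_zero 2 (circleMap_ne_center one_ne_zero)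
      have hc3 : Continuous fun θ : ℝ =>
          f (z₀ + circleMap 0 1 θ • (Pi.single i 1 : Fin p → ℂ)) :=
        hf.continuous.comp (continuous_const.add ((continuous_circleMap 0 1).smul continuous_const))
      exact hc1.smul (hc2.smul hc3)
    · -- hF'_meas
      have m1 : Measurable fun θ : ℝ =>
          fderiv ℂ f (z₀ + circleMap 0 1 θ • (Pi.single i 1 : Fin p → ℂ)) :=
        (measurable_fderiv ℂ f).comp
          (continuous_const.add ((continuous_circleMap 0 1).smul continuous_const)).measurable
      have m2 : Measurable fun θ : ℝ =>
          deriv (circleMap 0 1) θ * ((circleMap 0 1 θ) ^ 2)⁻¹ := by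
        apply Measurable.mul
        · rw [show deriv (circleMap 0 1) = fun θ => circleMap 0 1 θ * Complex.I from
            funext (deriv_circleMap 0 1)]
          exact ((continuous_circleMap 0 1).mul continuous_const).measurable
        · exact (((continuous_circleMap 0 1).pow 2).inv₀ fun θ =>
            pow_ne_zero 2 (circleMap_ne_center one_ne_zero)).measurable
      exact ((m2.stronglyMeasurable).smul (m1.stronglyMeasurable)).aestronglyMeasurable
    · -- h_bound
      refine Filter.Eventually.of_forall fun θ => fun z hz => ?_
      rw [hF']
      simp only
      refine le_trans (ContinuousLinearMap.opNorm_smul_le _ _) ?_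
      rw [hkernel θ, one_mul]
      apply fderiv_norm_le hf
      intro w hw
      apply hC
      have h2 := hmem z hz θ
      rw [mem_closedBall] at *
      calc dist w z₀ ≤ dist w (z + circleMap 0 1 θ • (Pi.single i 1 : Fin p → ℂ)) +
            dist (z + circleMap 0 1 θ • (Pi.single i 1 : Fin p → ℂ)) z₀ := dist_triangle _ _ _
        _ ≤ 1 + 2 := add_le_add hw h2
        _ ≤ 3 := by norm_num
    · -- bound_integrable
      exact integrableOn_const measure_Ioc_lt_top.ne
    · -- h_diff
      refine Filter.Eventually.of_forall fun θ => fun z hz => ?_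
      have hφ : (fun z => phi i f z θ) = fun z =>
          (deriv (circleMap 0 1) θ * ((circleMap 0 1 θ) ^ 2)⁻¹) •
            f (z + circleMap 0 1 θ • (Pi.single i 1 : Fin p → ℂ)) := by
        funext z
        rw [phi, smul_smul]
      rw [hφ, hF']
      have hinner : HasFDerivAt
          (fun z : Fin p → ℂ => z + circleMap 0 1 θ • (Pi.single i 1 : Fin p → ℂ))
          (ContinuousLinearMap.id ℂ (Fin p → ℂ)) z := (hasFDerivAt_id z).add_const _
      have hcomp := ((hf _).hasFDerivAt.comp z hinner)
      rw [ContinuousLinearMap.comp_id] at hcomp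
      exact hcomp.const_smul (deriv (circleMap 0 1) θ * ((circleMap 0 1 θ) ^ 2)⁻¹)
  have heq : pd i f = fun z =>
      (2 * ↑π * Complex.I)⁻¹ • ∫ θ in Set.Ioc (0:ℝ) (2*π), phi i f z θ :=
    funext (pd_rep hf i)
  rw [heq]
  exact DifferentiableAt.fun_const_smul key.differentiableAt _

end Reg2

section Derivs

variable {p : ℕ}

lemma mpd_differentiable (α : Fin p → ℕ) :
    ∀ f : (Fin p → ℂ) → ℂ, Differentiable ℂ f → Differentiable ℂ (mpd α f) := by
  induction α using multiindex_induction with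
  | h0 => intro f hf; rwa [mpd_zero]
  | hstep α i hi hlt IH =>
    intro f hf
    rw [mpd_succ α i hlt hi]
    exact pd_differentiable (IH f hf) i

lemma pd_mul {c d : (Fin p → ℂ) → ℂ} {z : Fin p → ℂ} (i : Fin p)
    (hc : DifferentiableAt ℂ c z) (hd : DifferentiableAt ℂ d z) :
    pd i (fun w => c w * d w) z = c z * pd i d z + d z * pd i c z := by
  unfold pd
  rw [fderiv_fun_mul hc hd]
  simp

lemma pd_sum {ι : Type*} (s : Finset ι) (F : ι → (Fin p → ℂ) → ℂ) {z : Fin p → ℂ} (i : Fin p)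
    (h : ∀ b ∈ s, DifferentiableAt ℂ (F b) z) :
    pd i (fun w => ∑ b ∈ s, F b w) z = ∑ b ∈ s, pd i (F b) z := by
  unfold pd
  rw [fderiv_fun_sum h]
  simp

end Derivs

section Leibniz

variable {p : ℕ}

lemma pi_le_sum_eq {a b : Fin p → ℕ} (h : a ≤ b) (hs : ∑ j, b j ≤ ∑ j, a j) : a = b := by
  funext j
  by_contra hne
  have hlt : a j < b j := lt_of_le_of_ne (h j) hne
  have : ∑ k, a k < ∑ k, b k :=
    Finset.sum_lt_sum (fun k _ => h k) ⟨j, Finset.mem_univ j, hlt⟩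
  omega

lemma leibniz {g : (Fin p → ℂ) → ℂ} (hg : Differentiable ℂ g) :
    ∀ α : Fin p → ℕ, ∃ c : (Fin p → ℕ) → (Fin p → ℂ) → ℂ,
      (∀ β, Differentiable ℂ (c β)) ∧ c α = g ∧
      ∀ f : (Fin p → ℂ) → ℂ, Differentiable ℂ f →
        mpd α (fun w => g w * f w) = fun z => ∑ β ∈ Finset.Iic α, c β z * mpd β f z := by
  intro α
  induction α using multiindex_induction with
  | h0 =>
    refine ⟨fun _ => g, fun _ => hg, rfl, fun f hf => ?_⟩
    funext z
    have hIic : Finset.Iic (0 : Fin p → ℕ) = {0} := by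
      ext γ
      simp only [Finset.mem_Iic, Finset.mem_singleton]
      constructor
      · intro hγ; funext j; exact Nat.le_zero.mp (hγ j)
      · rintro rfl; exact le_rfl
    rw [hIic, Finset.sum_singleton, mpd_zero, mpd_zero]
  | hstep α i hi hlt IH =>
    classical
    obtain ⟨c, hcdiff, hcα, hcf⟩ := IH
    obtain ⟨e, heq, hei, hej⟩ : ∃ e : Fin p → ℕ, e = Pi.single i 1 ∧ e i = 1 ∧
        ∀ j, j ≠ i → e j = 0 :=
      ⟨Pi.single i 1, rfl, Pi.single_eq_same i 1, fun j hj => Pi.single_eq_of_ne hj 1⟩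
    rw [← heq] at hcα hcf
    have fact1 : (α - e) + e = α := by
      funext j
      simp only [Pi.add_apply, Pi.sub_apply]
      rcases eq_or_ne j i with rfl | hj
      · rw [hei]; omega
      · rw [hej j hj]; omega
    have fact3 : ∀ β : Fin p → ℕ, β ≤ α - e → ∀ j, j < i → β j = 0 := by
      intro β hβ j hj
      have h1 : β j ≤ (α - e) j := hβ j
      rw [Pi.sub_apply, hlt j hj] at h1
      omega
    have addsub : ∀ β : Fin p → ℕ, (β + e) - e = β := by
      intro β
      funext j
      simp only [Pi.sub_apply, Pi.add_apply]
      omega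
    have mpd_step : ∀ β : Fin p → ℕ, β ≤ α - e → ∀ f : (Fin p → ℂ) → ℂ,
        mpd (β + e) f = pd i (mpd β f) := by
      intro β hβ f
      have h1 : (β + e) i ≠ 0 := by
        rw [Pi.add_apply, hei]; omega
      have h2 : ∀ j, j < i → (β + e) j = 0 := by
        intro j hj
        rw [Pi.add_apply, fact3 β hβ j hj, hej j (ne_of_lt hj)]
      rw [mpd_succ (β + e) i h2 h1, ← heq, addsub β]
    refine ⟨fun γ => (if γ ≤ α - e then pd i (c γ) else 0)
      + (if e ≤ γ ∧ γ - e ≤ α - e then c (γ - e) else 0), ?_, ?_, ?_⟩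
    · intro β
      apply Differentiable.add
      · split_ifs
        · exact pd_differentiable (hcdiff β) i
        · exact differentiable_const 0
      · split_ifs
        · exact hcdiff _
        · exact differentiable_const 0
    · have hnle : ¬ (α ≤ α - e) := by
        intro hle
        have h1 : α i ≤ (α - e) i := hle i
        rw [Pi.sub_apply, hei] at h1
        omega
      have hele : e ≤ α := by
        rw [Pi.le_def]
        intro j
        rcases eq_or_ne j i with rfl | hj
        · rw [hei]; omega
        · rw [hej j hj]; omega
      simp only [if_neg hnle, if_pos (show e ≤ α ∧ α - e ≤ α - e from ⟨hele, le_rfl⟩),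
        hcα, zero_add]
    · intro f hf
      rw [mpd_succ α i hlt hi, ← heq, hcf f hf]
      funext z
      rw [pd_sum _ (fun β w => c β w * mpd β f w) i (fun β _ => ((hcdiff β) z).mul ((mpd_differentiable β f hf) z))]
      have step1 : ∀ β ∈ Finset.Iic (α - e),
          pd i (fun w => c β w * mpd β f w) z
            = c β z * mpd (β + e) f z + mpd β f z * pd i (c β) z := by
        intro β hβ
        rw [pd_mul i ((hcdiff β) z) ((mpd_differentiable β f hf) z),
          mpd_step β (Finset.mem_Iic.mp hβ) f]
      rw [Finset.sum_congr rfl step1, Finset.sum_add_distrib]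
      have expand : ∀ γ : Fin p → ℕ,
          ((if γ ≤ α - e then pd i (c γ) else 0)
            + (if e ≤ γ ∧ γ - e ≤ α - e then c (γ - e) else 0)) z * mpd γ f z
          = (if γ ≤ α - e then pd i (c γ) z * mpd γ f z else 0)
            + (if e ≤ γ ∧ γ - e ≤ α - e then c (γ - e) z * mpd γ f z else 0) := by
        intro γ
        rw [Pi.add_apply, add_mul]
        congr 1
        · split_ifs <;> simp
        · split_ifs <;> simp
      rw [Finset.sum_congr rfl (fun γ _ => expand γ), Finset.sum_add_distrib]
      have hsub : Finset.Iic (α - e) ⊆ Finset.Iic α := by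
        apply Finset.Iic_subset_Iic.mpr
        rw [Pi.le_def]
        intro j
        rw [Pi.sub_apply]
        omega
      have piece1 : ∑ γ ∈ Finset.Iic α, (if γ ≤ α - e then pd i (c γ) z * mpd γ f z else 0)
          = ∑ β ∈ Finset.Iic (α - e), mpd β f z * pd i (c β) z := by
        rw [← Finset.sum_subset hsub]
        · apply Finset.sum_congr rfl
          intro γ hγ
          rw [if_pos (Finset.mem_Iic.mp hγ), mul_comm]
        · intro γ _ hγ
          rw [if_neg (fun h => hγ (Finset.mem_Iic.mpr h))]
      have piece2 : ∑ γ ∈ Finset.Iic α,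
            (if e ≤ γ ∧ γ - e ≤ α - e then c (γ - e) z * mpd γ f z else 0)
          = ∑ β ∈ Finset.Iic (α - e), c β z * mpd (β + e) f z := by
        rw [← Finset.sum_filter]
        symm
        refine Finset.sum_nbij' (i := fun β => β + e) (j := fun γ => γ - e) ?_ ?_ ?_ ?_ ?_
        · intro β hβ
          rw [Finset.mem_filter]
          have hβ' := Finset.mem_Iic.mp hβ
          refine ⟨Finset.mem_Iic.mpr ?_, ⟨?_, by rw [addsub β]; exact hβ'⟩⟩
          · rw [← fact1, Pi.le_def]
            intro j
            simp only [Pi.add_apply]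
            exact Nat.add_le_add_right (hβ' j) _
          · rw [Pi.le_def]
            intro j
            simp only [Pi.add_apply]
            omega
        · intro γ hγ
          rw [Finset.mem_filter] at hγ
          exact Finset.mem_Iic.mpr hγ.2.2
        · intro β hβ
          exact addsub β
        · intro γ hγ
          rw [Finset.mem_filter] at hγ
          funext j
          have h1 : e j ≤ γ j := hγ.2.1 j
          simp only [Pi.add_apply, Pi.sub_apply]
          omega
        · intro β hβ
          rw [addsub β]
      rw [piece1, piece2, add_comm]

end Leibniz

section Det

lemma det_aux {n p : ℕ} (β : Fin n → (Fin p → ℕ)) (hinj : Function.Injective β)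
    (A : Matrix (Fin n) (Fin n) ℂ) (g : ℂ)
    (hdiag : ∀ k, A k k = g) (hzero : ∀ i k, ¬ (β k ≤ β i) → A i k = 0) :
    A.det = g ^ n := by
  rw [Matrix.det_apply]
  rw [Finset.sum_eq_single_of_mem (1 : Equiv.Perm (Fin n)) (Finset.mem_univ 1)]
  · simp [hdiag]
  · intro σ _ hσ
    suffices h : ∏ i, A (σ i) i = 0 by rw [h, smul_zero]
    by_contra hne
    have hA : ∀ i, A (σ i) i ≠ 0 := fun i h0 =>
      hne (Finset.prod_eq_zero (Finset.mem_univ i) h0)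
    have hle : ∀ i, β i ≤ β (σ i) := fun i => by
      by_contra hc
      exact hA i (hzero (σ i) i hc)
    have h1 : ∀ i : Fin n, (∑ j, β i j) ≤ ∑ j, β (σ i) j := by
      intro i
      refine Finset.sum_le_sum fun j _ => ?_
      exact (hle i) j
    have h2 : (∑ i, ∑ j, β i j) = ∑ i, ∑ j, β (σ i) j := (Equiv.sum_comp σ _).symm
    have h3 : ∀ i : Fin n, (∑ j, β i j) = ∑ j, β (σ i) j :=
      fun i => (Finset.sum_eq_sum_iff_of_le fun i _ => h1 i).mp h2 i (Finset.mem_univ i)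
    have hβeq : ∀ i, β i = β (σ i) :=
      fun i => pi_le_sum_eq (hle i) (le_of_eq (h3 i).symm)
    exact hσ (Equiv.ext fun i => (hinj (hβeq i).symm))

end Det

/-- The generalized Wronskian of `f 0, …, f m` associated to the family of words (multi-indices)
`u 0, …, u (m-1)`: the determinant of the `(m+1)×(m+1)` matrix whose first row is
`(f 0, …, f m)` and whose further rows are `(∂^{u i} f 0, …, ∂^{u i} f m)`. -/
noncomputable def genWronskian {p m : ℕ} (u : Fin m → Fin p → ℕ)
    (f : Fin (m + 1) → (Fin p → ℂ) → ℂ) : (Fin p → ℂ) → ℂ :=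
  fun z => Matrix.det (Matrix.of fun i j =>
    Fin.cases (f j z) (fun i' => mpd (u i') (f j) z) i)

/-- A full set of words of size `m` over the alphabet `{1,…,p}`: a set of `m` distinct nonzero
multi-indices which is admissible (it can be ordered `u_1, …, u_m` with `|u_i| ≤ i`) and is
closed under taking nonzero sub-multi-indices (subwords). -/
structure FullSet (p m : ℕ) where
  u : Fin m → Fin p → ℕ
  ne_zero : ∀ i, u i ≠ 0
  inj : Function.Injective u
  admissible : ∃ σ : Equiv.Perm (Fin m), ∀ i, (∑ k, u (σ i) k) ≤ (i : ℕ) + 1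
  full : ∀ i (β : Fin p → ℕ), β ≠ 0 → β ≤ u i → ∃ j, u j = β

/-- Pure geometric generalized Wronskians are geometric: for a full set `U` of size `m`,
`W_U(g·f 0, …, g·f m) = g^{m+1} · W_U(f 0, …, f m)` for all holomorphic functions. -/
theorem pure_geometric_wronskian_mul {p m : ℕ} (U : FullSet p m)
    (g : (Fin p → ℂ) → ℂ) (f : Fin (m + 1) → (Fin p → ℂ) → ℂ)
    (hg : Differentiable ℂ g) (hf : ∀ j, Differentiable ℂ (f j)) :
    ∀ z, genWronskian U.u (fun j => fun w => g w * f j w) z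
      = g z ^ (m + 1) * genWronskian U.u f z := by

  intro z
  classical
  set β : Fin (m+1) → (Fin p → ℕ) := fun i => Fin.cases 0 U.u i with hβ
  have hβ0 : β 0 = 0 := by simp [hβ]
  have hβs : ∀ i', β i'.succ = U.u i' := fun i' => by simp [hβ]
  have hβinj : Function.Injective β := by
    intro a b hab
    induction a using Fin.cases with
    | zero =>
      induction b using Fin.cases with
      | zero => rfl
      | succ b' =>
        rw [hβ0, hβs] at hab
        exact absurd hab.symm (U.ne_zero b')
    | succ a' =>
      induction b using Fin.cases with
      | zero =>
        rw [hβ0, hβs] at hab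
        exact absurd hab (U.ne_zero a')
      | succ b' =>
        rw [hβs, hβs] at hab
        exact congrArg Fin.succ (U.inj hab)
  choose c hcdiff hcg hcf using fun i : Fin (m+1) => leibniz hg (β i)
  set M : Matrix (Fin (m+1)) (Fin (m+1)) ℂ := Matrix.of fun i j => mpd (β i) (f j) z with hM
  set A : Matrix (Fin (m+1)) (Fin (m+1)) ℂ :=
    Matrix.of fun i k => if β k ≤ β i then c i (β k) z else 0 with hA
  have hWf : genWronskian U.u f z = M.det := by
    unfold genWronskian
    congr 1
    ext i j
    induction i using Fin.cases with
    | zero =>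
      show f j z = mpd (β 0) (f j) z
      rw [hβ0, mpd_zero]
    | succ i' =>
      show mpd (U.u i') (f j) z = mpd (β i'.succ) (f j) z
      rw [hβs]
  have hWgf : genWronskian U.u (fun j => fun w => g w * f j w) z
      = Matrix.det (Matrix.of fun i j => mpd (β i) (fun w => g w * f j w) z) := by
    unfold genWronskian
    congr 1
    ext i j
    induction i using Fin.cases with
    | zero =>
      show g z * f j z = mpd (β 0) (fun w => g w * f j w) z
      rw [hβ0, mpd_zero]
    | succ i' =>
      show mpd (U.u i') (fun w => g w * f j w) z = mpd (β i'.succ) (fun w => g w * f j w) z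
      rw [hβs]
  have hprod : (Matrix.of fun i j => mpd (β i) (fun w => g w * f j w) z) = A * M := by
    ext i j
    rw [Matrix.mul_apply]
    have h1 : mpd (β i) (fun w => g w * f j w) z
        = ∑ γ ∈ Finset.Iic (β i), c i γ z * mpd γ (f j) z :=
      congrFun (hcf i (f j) (hf j)) z
    show mpd (β i) (fun w => g w * f j w) z = ∑ k, A i k * M k j
    rw [h1]
    show _ = ∑ k, (if β k ≤ β i then c i (β k) z else 0) * mpd (β k) (f j) z
    have h2 : ∀ k : Fin (m+1), (if β k ≤ β i then c i (β k) z else 0) * mpd (β k) (f j) z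
        = if β k ≤ β i then c i (β k) z * mpd (β k) (f j) z else 0 := by
      intro k
      split_ifs <;> simp
    rw [Finset.sum_congr rfl fun k _ => h2 k, ← Finset.sum_filter]
    symm
    refine Finset.sum_bij (i := fun k _ => β k) ?_ ?_ ?_ ?_
    · intro k hk
      rw [Finset.mem_filter] at hk
      exact Finset.mem_Iic.mpr hk.2
    · intro a ha b hb hab
      exact hβinj hab
    · intro γ hγ
      have hγle : γ ≤ β i := Finset.mem_Iic.mp hγ
      rcases eq_or_ne γ 0 with rfl | hγ0
      · exact ⟨0, Finset.mem_filter.mpr ⟨Finset.mem_univ 0, by rw [hβ0]; exact hγle.trans' le_rfl⟩,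
          hβ0⟩
      · induction i using Fin.cases with
        | zero =>
          exfalso
          apply hγ0
          rw [hβ0] at hγle
          funext j'
          exact Nat.le_zero.mp (hγle j')
        | succ i' =>
          rw [hβs] at hγle
          obtain ⟨k, hk⟩ := U.full i' γ hγ0 hγle
          refine ⟨k.succ, Finset.mem_filter.mpr ⟨Finset.mem_univ _, ?_⟩, by show β k.succ = γ; rw [hβs, hk]⟩
          rw [hβs, hk, hβs]
          exact hγle
    · intro k hk
      rfl
  have hdetA : A.det = (g z) ^ (m + 1) := by
    refine det_aux β hβinj A (g z) ?_ ?_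
    · intro k
      show (if β k ≤ β k then c k (β k) z else 0) = g z
      rw [if_pos le_rfl, hcg k]
    · intro i k hik
      show (if β k ≤ β i then c i (β k) z else 0) = 0
      rw [if_neg hik]
  rw [hWf, hWgf, hprod, Matrix.det_mul, hdetA]
end

section
/- (Key lemma for geometric Vandermondes.) Let U be a full set of words of size m over {1,...,p}. For columns C_0,...,C_m ∈ ℂ^p and any constant vector C ∈ ℂ^p, the geometric Vandermonde determinant satisfies V_U(C_0 + C, ..., C_m + C) = V_U(C_0, ..., C_m). -/
/-- The geometric Vandermonde associated to a full set `U` of size `m`: the determinant of the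
`(m+1)×(m+1)` matrix whose first row is `(1,…,1)` and whose further rows are
`(C_0^{u_i}, …, C_m^{u_i})`, where `C^α = ∏ₖ C k ^ α k`. -/
noncomputable def geomVandermonde {p m : ℕ} (U : FullSet p m)
    (C : Fin (m + 1) → Fin p → ℂ) : ℂ :=
  Matrix.det (Matrix.of fun i j =>
    Fin.cases (1 : ℂ) (fun i' => ∏ k, C j k ^ U.u i' k) i)

private lemma binom_pi {p : ℕ} (α : Fin p → ℕ) (x cv : Fin p → ℂ) :
    ∏ k, (x k + cv k) ^ α k
      = ∑ β ∈ Fintype.piFinset (fun k => Finset.range (α k + 1)),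
          ∏ k, (((α k).choose (β k) : ℂ) * x k ^ β k * cv k ^ (α k - β k)) := by
  have h1 : ∏ k, (x k + cv k) ^ α k
      = ∏ k, ∑ b ∈ Finset.range (α k + 1),
          (((α k).choose b : ℂ) * x k ^ b * cv k ^ (α k - b)) := by
    refine Finset.prod_congr rfl fun k _ => ?_
    rw [add_pow]
    exact Finset.sum_congr rfl fun b _ => by ring
  rw [h1, Finset.prod_univ_sum]

open scoped Classical in
private lemma key_row {p m : ℕ} (U : FullSet p m) (i' : Fin m) (x cv : Fin p → ℂ) :
    ∏ k, (x k + cv k) ^ U.u i' k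
      = (∏ k, cv k ^ U.u i' k)
        + ∑ j' : Fin m, (if U.u j' ≤ U.u i' then
            ∏ k, (((U.u i' k).choose (U.u j' k) : ℂ) * cv k ^ (U.u i' k - U.u j' k)) else 0)
            * ∏ k, x k ^ U.u j' k := by
  rw [binom_pi]
  set α := U.u i' with hα
  set F : (Fin p → ℕ) → ℂ := fun β =>
    ∏ k, (((α k).choose (β k) : ℂ) * x k ^ β k * cv k ^ (α k - β k)) with hF
  have h0 : (0 : Fin p → ℕ) ∈ Fintype.piFinset (fun k => Finset.range (α k + 1)) := by
    simp [Fintype.mem_piFinset]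
  rw [← Finset.add_sum_erase _ F h0]
  congr 1
  · simp [F]
  · have hfil : ∑ β ∈ (Fintype.piFinset (fun k => Finset.range (α k + 1))).erase 0, F β
        = ∑ j' ∈ Finset.univ.filter (fun j' : Fin m => U.u j' ≤ α), F (U.u j') := by
      refine (Finset.sum_bij (fun j' _ => U.u j') ?_ ?_ ?_ ?_).symm
      · intro j' hj'
        simp only [Finset.mem_filter, Finset.mem_univ, true_and] at hj'
        refine Finset.mem_erase.2 ⟨U.ne_zero j', ?_⟩
        simp only [Fintype.mem_piFinset, Finset.mem_range]
        exact fun k => Nat.lt_succ_of_le (hj' k)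
      · intro a ha b hb hab
        exact U.inj hab
      · intro β hβ
        rw [Finset.mem_erase] at hβ
        obtain ⟨hne, hmem⟩ := hβ
        simp only [Fintype.mem_piFinset, Finset.mem_range] at hmem
        have hle : β ≤ α := fun k => Nat.lt_succ_iff.1 (hmem k)
        obtain ⟨j, hj⟩ := U.full i' β hne hle
        exact ⟨j, Finset.mem_filter.2 ⟨Finset.mem_univ _, hj ▸ hle⟩, hj⟩
      · intros; rfl
    rw [hfil, Finset.sum_filter]
    refine Finset.sum_congr rfl fun j' _ => ?_
    by_cases h : U.u j' ≤ α
    · simp only [h, if_true, F]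
      rw [← Finset.prod_mul_distrib]
      exact Finset.prod_congr rfl fun k _ => by ring
    · simp [h, F]

/-- Translation invariance of geometric Vandermondes: for any full set `U` and any constant
vector `c`, `V_U(C_0 + c, …, C_m + c) = V_U(C_0, …, C_m)`. -/
theorem geomVandermonde_translation {p m : ℕ} (U : FullSet p m)
    (C : Fin (m + 1) → Fin p → ℂ) (c : Fin p → ℂ) :
    geomVandermonde U (fun j => C j + c) = geomVandermonde U C := by
  classical
  set V : Matrix (Fin (m + 1)) (Fin (m + 1)) ℂ := Matrix.of fun i j =>
    Fin.cases (1 : ℂ) (fun i' => ∏ k, C j k ^ U.u i' k) i with hV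
  set M : Matrix (Fin (m + 1)) (Fin (m + 1)) ℂ := Matrix.of fun i j =>
    Fin.cases (Fin.cases (1 : ℂ) (fun _ => 0) j)
      (fun i' => Fin.cases (∏ k, c k ^ U.u i' k)
        (fun j' => if U.u j' ≤ U.u i' then
          ∏ k, (((U.u i' k).choose (U.u j' k) : ℂ) * c k ^ (U.u i' k - U.u j' k)) else 0) j) i
    with hM
  -- the translated matrix is M * V
  have hprod : (Matrix.of fun i j =>
      Fin.cases (1 : ℂ) (fun i' => ∏ k, ((fun j => C j + c) j) k ^ U.u i' k) i) = M * V := by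
    ext i j
    rw [Matrix.mul_apply, Fin.sum_univ_succ]
    induction i using Fin.cases with
    | zero =>
      simp [M, V]
    | succ i' =>
      simp only [Matrix.of_apply, Fin.cases_succ, Fin.cases_zero, M, V, hM, hV, Pi.add_apply,
        mul_one]
      rw [key_row U i' (C j) c]
  -- M is triangular with respect to the degree function, with unit diagonal
  have hdeg : ∀ i j : Fin (m + 1), i ≠ j →
      (Fin.cases 0 (fun i' => ∑ k, U.u i' k) i : ℕ) ≤ Fin.cases 0 (fun j' => ∑ k, U.u j' k) j →
      M i j = 0 := by
    intro i j hij hle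
    induction i using Fin.cases with
    | zero =>
      induction j using Fin.cases with
      | zero => exact absurd rfl hij
      | succ j' => simp [M]
    | succ i' =>
      induction j using Fin.cases with
      | zero =>
        exfalso
        simp only [Fin.cases_succ, Fin.cases_zero, Nat.le_zero, Finset.sum_eq_zero_iff,
          Finset.mem_univ, forall_true_left] at hle
        exact U.ne_zero i' (funext fun k => hle k)
      | succ j' =>
        simp only [Fin.cases_succ] at hle
        simp only [Matrix.of_apply, Fin.cases_succ, M]
        rw [if_neg]
        intro hcon
        have hne : U.u j' ≠ U.u i' := by
          intro h
          exact hij (by rw [U.inj h])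
        obtain ⟨k, hk⟩ := Function.ne_iff.1 hne
        have : ∑ k, U.u j' k < ∑ k, U.u i' k :=
          Finset.sum_lt_sum (fun k _ => hcon k) ⟨k, Finset.mem_univ k, lt_of_le_of_ne (hcon k) hk⟩
        omega
  have hdetM : M.det = 1 := by
    set g : Fin (m + 1) → ℕ := fun i => Fin.cases 0 (fun i' => ∑ k, U.u i' k) i with hg
    set σ := Tuple.sort g with hσ
    have hmono : Monotone (g ∘ σ) := Tuple.monotone_sort g
    rw [← Matrix.det_submatrix_equiv_self σ M]
    rw [Matrix.det_of_lowerTriangular]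
    · refine Finset.prod_eq_one fun i _ => ?_
      simp only [Matrix.submatrix_apply]
      induction (σ i) using Fin.cases with
      | zero => simp [M]
      | succ i' => simp [M]
    · intro i j hji
      have hji' : (i : Fin (m + 1)) < j := hji
      simp only [Matrix.submatrix_apply]
      refine hdeg (σ i) (σ j) (fun h => absurd (σ.injective h) (ne_of_lt hji')) ?_
      exact hmono hji'.le
  calc geomVandermonde U (fun j => C j + c)
      = (M * V).det := by rw [geomVandermonde, hprod]
    _ = M.det * V.det := Matrix.det_mul M V
    _ = V.det := by rw [hdetM, one_mul]
    _ = geomVandermonde U C := rfl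
end

section
/- Let n ≥ 1, p ≥ 1, set m = binom(p+n,p) − 1, and let U_n = {α ∈ ℕ^p : 1 ≤ |α| ≤ n}. If f_0, ..., f_m are polynomials forming a ℂ-basis of the space ℂ[Z_1,...,Z_p]_{≤n} of polynomials of total degree ≤ n, then the pure geometric generalized Wronskian W_{U_n}(f_0,...,f_m) is a nonzero constant. -/
/-- The set `U_n` of all nonzero multi-indices `α ∈ ℕ^p` with `|α| ≤ n`. -/
def Ufin (p n : ℕ) : Finset (Fin p → ℕ) :=
  (Fintype.piFinset fun _ : Fin p => Finset.range (n + 1)).filter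
    (fun α => α ≠ 0 ∧ ∑ i, α i ≤ n)

open MvPolynomial

section Aux

variable {p : ℕ}

lemma hasFDerivAt_eval (P : MvPolynomial (Fin p) ℂ) (z : Fin p → ℂ) :
    HasFDerivAt (fun w : Fin p → ℂ => MvPolynomial.eval w P)
      (∑ i, MvPolynomial.eval z (pderiv i P) • (ContinuousLinearMap.proj i : (Fin p → ℂ) →L[ℂ] ℂ))
      z := by
  induction P using MvPolynomial.induction_on with
  | C a =>
      have hD : (∑ i, MvPolynomial.eval z (pderiv i (C a : MvPolynomial (Fin p) ℂ)) •
            (ContinuousLinearMap.proj i : (Fin p → ℂ) →L[ℂ] ℂ)) = 0 := by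
        ext w; simp [pderiv_C]
      have hF : (fun w : Fin p → ℂ => MvPolynomial.eval w (C a : MvPolynomial (Fin p) ℂ))
          = fun _ => a := by funext w; simp
      rw [hF, hD]
      exact hasFDerivAt_const a z
  | add P Q hP hQ =>
      have hD : (∑ i, MvPolynomial.eval z (pderiv i (P + Q)) •
            (ContinuousLinearMap.proj i : (Fin p → ℂ) →L[ℂ] ℂ))
          = (∑ i, MvPolynomial.eval z (pderiv i P) •
              (ContinuousLinearMap.proj i : (Fin p → ℂ) →L[ℂ] ℂ))
            + (∑ i, MvPolynomial.eval z (pderiv i Q) •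
              (ContinuousLinearMap.proj i : (Fin p → ℂ) →L[ℂ] ℂ)) := by
        ext w
        simp [map_add, add_mul, Finset.sum_add_distrib]
      have hF : (fun w : Fin p → ℂ => MvPolynomial.eval w (P + Q))
          = fun w => MvPolynomial.eval w P + MvPolynomial.eval w Q := by
        funext w; rw [map_add]
      rw [hF, hD]; exact hP.add hQ
  | mul_X P j hP =>
      have hx : HasFDerivAt (fun w : Fin p → ℂ => w j)
          (ContinuousLinearMap.proj j : (Fin p → ℂ) →L[ℂ] ℂ) z :=
        (ContinuousLinearMap.proj j : (Fin p → ℂ) →L[ℂ] ℂ).hasFDerivAt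
      have h := hP.mul hx
      have hF : (fun w : Fin p → ℂ => MvPolynomial.eval w (P * X j))
          = fun w => MvPolynomial.eval w P * w j := by
        funext w; simp
      have e1 : ∀ i : Fin p, MvPolynomial.eval z (pderiv i (P * X j))
          = MvPolynomial.eval z (pderiv i P) * z j
            + (if j = i then MvPolynomial.eval z P else 0) := by
        intro i
        rw [pderiv_mul, map_add, map_mul, map_mul, eval_X, pderiv_X, Pi.single_apply,
          apply_ite (MvPolynomial.eval z), map_one, map_zero]
        split <;> ring
      have hD : (∑ i, MvPolynomial.eval z (pderiv i (P * X j)) •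
            (ContinuousLinearMap.proj i : (Fin p → ℂ) →L[ℂ] ℂ))
          = MvPolynomial.eval z P • (ContinuousLinearMap.proj j : (Fin p → ℂ) →L[ℂ] ℂ)
            + z j • ∑ i, MvPolynomial.eval z (pderiv i P) •
              (ContinuousLinearMap.proj i : (Fin p → ℂ) →L[ℂ] ℂ) := by
        ext w
        simp only [ContinuousLinearMap.coe_sum', Finset.sum_apply, ContinuousLinearMap.coe_smul',
          Pi.smul_apply, ContinuousLinearMap.proj_apply, smul_eq_mul,
          ContinuousLinearMap.add_apply, e1]
        have e2 : ∀ i : Fin p,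
            (MvPolynomial.eval z (pderiv i P) * z j
              + (if j = i then MvPolynomial.eval z P else 0)) * w i
            = z j * (MvPolynomial.eval z (pderiv i P) * w i)
              + (if j = i then MvPolynomial.eval z P * w i else 0) := by
          intro i; split <;> ring
        rw [Finset.sum_congr rfl fun i _ => e2 i, Finset.sum_add_distrib, ← Finset.mul_sum,
          Finset.sum_ite_eq]
        simp [add_comm]
      rw [hF, hD]; exact h

lemma pd_eval (i : Fin p) (P : MvPolynomial (Fin p) ℂ) :
    pd i (fun w => MvPolynomial.eval w P) = fun z => MvPolynomial.eval z (pderiv i P) := by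
  funext z
  show fderiv ℂ (fun w => MvPolynomial.eval w P) z (Pi.single i 1) = _
  rw [(hasFDerivAt_eval P z).fderiv]
  simp [Pi.single_apply, Finset.sum_ite_eq]

lemma pd_iterate_eval (i : Fin p) (k : ℕ) (P : MvPolynomial (Fin p) ℂ) :
    (pd i)^[k] (fun w => MvPolynomial.eval w P)
      = fun w => MvPolynomial.eval w ((⇑(pderiv i) : MvPolynomial (Fin p) ℂ → _)^[k] P) := by
  induction k generalizing P with
  | zero => rfl
  | succ k ih =>
      rw [Function.iterate_succ_apply, Function.iterate_succ_apply, pd_eval, ih]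

/-- The polynomial-level iterated partial derivative associated to a multi-index. -/
noncomputable def mderP (α : Fin p → ℕ) : MvPolynomial (Fin p) ℂ → MvPolynomial (Fin p) ℂ :=
  (List.ofFn fun i : Fin p => (⇑(pderiv i) : MvPolynomial (Fin p) ℂ → _)^[α i]).foldr (· ∘ ·) id

lemma mpd_eval (α : Fin p → ℕ) (P : MvPolynomial (Fin p) ℂ) :
    mpd α (fun w => MvPolynomial.eval w P) = fun w => MvPolynomial.eval w (mderP α P) := by
  unfold mpd mderP
  rw [List.ofFn_eq_map, List.ofFn_eq_map]
  induction (List.finRange p) generalizing P with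
  | nil => rfl
  | cons i l ih =>
      simp only [List.map_cons, List.foldr_cons]
      change (pd i)^[α i] (((l.map fun i => (pd i)^[α i]).foldr (· ∘ ·) id)
        (fun w => MvPolynomial.eval w P)) = _
      rw [ih, pd_iterate_eval]
      rfl

lemma pderiv_iterate_monomial (i : Fin p) (k : ℕ) (β : Fin p →₀ ℕ) (c : ℂ) :
    (⇑(pderiv i) : MvPolynomial (Fin p) ℂ → _)^[k] (monomial β c)
      = monomial (β - Finsupp.single i k) (c * ((β i).descFactorial k : ℕ)) := by
  induction k with
  | zero => simp
  | succ k ih =>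
      rw [Function.iterate_succ_apply', ih, pderiv_monomial]
      have h1 : (β - Finsupp.single i k) i = β i - k := by
        rw [Finsupp.tsub_apply, Finsupp.single_eq_same]
      have h2 : β - Finsupp.single i k - Finsupp.single i 1 = β - Finsupp.single i (k + 1) := by
        rw [tsub_tsub, ← Finsupp.single_add]
      rw [h1, h2, Nat.descFactorial_succ, Nat.cast_mul]
      congr 1
      ring

lemma sum_single_apply_eq_zero (α : Fin p → ℕ) (l : List (Fin p)) (i : Fin p)
    (hi : i ∉ l) : ((l.map fun j => Finsupp.single j (α j)).sum) i = 0 := by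
  induction l with
  | nil => simp
  | cons j l ih =>
      simp only [List.mem_cons, not_or] at hi
      simp [Finsupp.single_apply, Ne.symm hi.1, ih hi.2]

lemma mderP_monomial_aux (α : Fin p → ℕ) (l : List (Fin p)) (hl : l.Nodup)
    (β : Fin p →₀ ℕ) (c : ℂ) :
    ((l.map fun i => (⇑(pderiv i) : MvPolynomial (Fin p) ℂ → _)^[α i]).foldr (· ∘ ·) id)
        (monomial β c)
      = monomial (β - (l.map fun i => Finsupp.single i (α i)).sum)
          (c * ((l.map fun i => (β i).descFactorial (α i)).prod : ℕ)) := by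
  induction l with
  | nil => simp
  | cons i l ih =>
      obtain ⟨hi, hl'⟩ := List.nodup_cons.mp hl
      simp only [List.map_cons, List.foldr_cons, List.sum_cons, List.prod_cons]
      change (⇑(pderiv i))^[α i]
        (((l.map fun i => (⇑(pderiv i) : MvPolynomial (Fin p) ℂ → _)^[α i]).foldr (· ∘ ·) id)
          (monomial β c)) = _
      rw [ih hl', pderiv_iterate_monomial]
      have hS : (β - (l.map fun j => Finsupp.single j (α j)).sum) i = β i := by
        rw [Finsupp.tsub_apply, sum_single_apply_eq_zero α l i hi, Nat.sub_zero]
      rw [hS, tsub_tsub, add_comm ((l.map fun j => Finsupp.single j (α j)).sum)]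
      congr 1
      push_cast
      ring

lemma mderP_monomial (α : Fin p → ℕ) (β : Fin p →₀ ℕ) (c : ℂ) :
    mderP α (monomial β c)
      = monomial (β - Finsupp.equivFunOnFinite.symm α)
          (c * ((∏ i, (β i).descFactorial (α i) : ℕ) : ℂ)) := by
  unfold mderP
  rw [List.ofFn_eq_map, mderP_monomial_aux α _ (List.nodup_finRange p)]
  have h1 : ((List.finRange p).map fun i => Finsupp.single i (α i)).sum
      = Finsupp.equivFunOnFinite.symm α := by
    rw [← List.ofFn_eq_map, List.sum_ofFn]
    ext j
    simp [Finsupp.single_apply, Finsupp.finset_sum_apply, Finset.sum_ite_eq']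
  have h2 : ((List.finRange p).map fun i => (β i).descFactorial (α i)).prod
      = ∏ i, (β i).descFactorial (α i) := by
    rw [← List.ofFn_eq_map, List.prod_ofFn]
  rw [h1, h2]

lemma mderP_zero_word (P : MvPolynomial (Fin p) ℂ) : mderP (fun _ => 0) P = P := by
  unfold mderP
  rw [List.ofFn_eq_map]
  induction (List.finRange p) with
  | nil => rfl
  | cons i l ih => simpa using ih

lemma mderP_add (α : Fin p → ℕ) (P Q : MvPolynomial (Fin p) ℂ) :
    mderP α (P + Q) = mderP α P + mderP α Q := by
  unfold mderP
  rw [List.ofFn_eq_map]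
  induction (List.finRange p) generalizing P Q with
  | nil => rfl
  | cons i l ih =>
      simp only [List.map_cons, List.foldr_cons]
      change (⇑(pderiv i))^[α i] _ = (⇑(pderiv i))^[α i] _ + (⇑(pderiv i))^[α i] _
      rw [ih]
      generalize ((l.map fun i => (⇑(pderiv i) : MvPolynomial (Fin p) ℂ → _)^[α i]).foldr
        (· ∘ ·) id) P = A
      generalize ((l.map fun i => (⇑(pderiv i) : MvPolynomial (Fin p) ℂ → _)^[α i]).foldr
        (· ∘ ·) id) Q = B
      induction (α i) generalizing A B with
      | zero => rfl
      | succ k ihk => simp only [Function.iterate_succ_apply, map_add, ihk]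

lemma mderP_smul (α : Fin p → ℕ) (c : ℂ) (P : MvPolynomial (Fin p) ℂ) :
    mderP α (c • P) = c • mderP α P := by
  unfold mderP
  rw [List.ofFn_eq_map]
  induction (List.finRange p) generalizing P with
  | nil => rfl
  | cons i l ih =>
      simp only [List.map_cons, List.foldr_cons]
      change (⇑(pderiv i))^[α i] _ = c • (⇑(pderiv i))^[α i] _
      rw [ih]
      generalize ((l.map fun i => (⇑(pderiv i) : MvPolynomial (Fin p) ℂ → _)^[α i]).foldr
        (· ∘ ·) id) P = A
      induction (α i) generalizing A with
      | zero => rfl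
      | succ k ihk => simp only [Function.iterate_succ_apply, Derivation.map_smul, ihk]

lemma mderP_zero (α : Fin p → ℕ) : mderP α (0 : MvPolynomial (Fin p) ℂ) = 0 := by
  have h := mderP_smul α 0 (0 : MvPolynomial (Fin p) ℂ)
  simpa using h

lemma mderP_sum {ι : Type*} (α : Fin p → ℕ) (s : Finset ι)
    (h : ι → MvPolynomial (Fin p) ℂ) :
    mderP α (∑ k ∈ s, h k) = ∑ k ∈ s, mderP α (h k) := by
  induction s using Finset.cons_induction with
  | empty => simpa using mderP_zero α
  | cons a s ha ih => rw [Finset.sum_cons, Finset.sum_cons, mderP_add, ih]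

lemma prod_monomial {ι : Type*} (s : Finset ι) (d : ι → (Fin p →₀ ℕ)) (c : ι → ℂ) :
    ∏ i ∈ s, (monomial (d i) (c i) : MvPolynomial (Fin p) ℂ)
      = monomial (∑ i ∈ s, d i) (∏ i ∈ s, c i) := by
  induction s using Finset.cons_induction with
  | empty => simp
  | cons a s ha ih => rw [Finset.prod_cons, ih, monomial_mul, Finset.sum_cons, Finset.prod_cons]

lemma eval_zero_monomial (d : Fin p →₀ ℕ) (c : ℂ) :
    MvPolynomial.eval (0 : Fin p → ℂ) (monomial d c) = if d = 0 then c else 0 := by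
  rw [eval_monomial]
  split
  · subst ‹d = 0›; simp [Finsupp.prod]
  · rename_i hd
    have : ∃ j, d j ≠ 0 := by
      by_contra h
      push_neg at h
      exact hd (Finsupp.ext fun j => h j)
    obtain ⟨j, hj⟩ := this
    have hjs : j ∈ d.support := Finsupp.mem_support_iff.mpr hj
    rw [Finsupp.prod, Finset.prod_eq_zero hjs (by simp [zero_pow hj]), mul_zero]

end Aux

/-- If `f 0, …, f m` form a basis of the space of polynomials of total degree `≤ n` in `p`
variables (with `m = C(p+n,p) − 1`), then the pure geometric generalized Wronskian `W_{U_n}`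
of these polynomials is a nonzero constant. -/
theorem wronskian_of_basis_is_nonzero_constant (p n : ℕ) (hp : 1 ≤ p) (hn : 1 ≤ n)
    (m : ℕ) (hm : m = Nat.choose (p + n) p - 1)
    (u : Fin m → Fin p → ℕ) (hu_inj : Function.Injective u)
    (hu_mem : ∀ i, u i ∈ Ufin p n) (hu_surj : ∀ α ∈ Ufin p n, ∃ i, u i = α)
    (f : Fin (m + 1) → MvPolynomial (Fin p) ℂ)
    (hdeg : ∀ j, (f j).totalDegree ≤ n)
    (hindep : LinearIndependent ℂ f) :
    ∃ c : ℂ, c ≠ 0 ∧ ∀ z, genWronskian u (fun j w => MvPolynomial.eval w (f j)) z = c := by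
  classical
  -- the row words
  set v : Fin (m + 1) → Fin p → ℕ := Fin.cases 0 u with hv
  have hu_ne : ∀ i, u i ≠ 0 := fun i => ((Finset.mem_filter.mp (hu_mem i)).2).1
  have hv_inj : Function.Injective v := by
    intro a b hab
    induction a using Fin.cases with
    | zero => induction b using Fin.cases with
      | zero => rfl
      | succ b => exact absurd (by simpa [v] using hab.symm) (hu_ne b)
    | succ a => induction b using Fin.cases with
      | zero => exact absurd (by simpa [v] using hab) (hu_ne a)
      | succ b => exact congrArg Fin.succ (hu_inj (by simpa [v] using hab))
  set w : Fin (m + 1) → (Fin p →₀ ℕ) := fun k => Finsupp.equivFunOnFinite.symm (v k) with hw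
  have hw_apply : ∀ k j, w k j = v k j := by
    intro k j; simp [hw, Finsupp.equivFunOnFinite]
  have hw_inj : Function.Injective w :=
    fun a b hab => hv_inj (Finsupp.equivFunOnFinite.symm.injective hab)
  have hw_surj : ∀ β : Fin p →₀ ℕ, (β.sum fun _ e => e) ≤ n → ∃ k, w k = β := by
    intro β hβ
    have hsum : (∑ j, β j) ≤ n := by
      rw [← Finsupp.sum_fintype β (fun _ e => e) (fun _ => rfl)]
      exact hβ
    by_cases h0 : β = 0
    · refine ⟨0, ?_⟩
      subst h0
      ext j
      rw [hw_apply]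
      simp [v]
    · have hmem : (⇑β : Fin p → ℕ) ∈ Ufin p n := by
        refine Finset.mem_filter.mpr ⟨?_, ?_, hsum⟩
        · refine Fintype.mem_piFinset.mpr fun j => Finset.mem_range.mpr ?_
          have : β j ≤ ∑ i, β i := Finset.single_le_sum (fun _ _ => Nat.zero_le _)
            (Finset.mem_univ j)
          omega
        · intro hc
          exact h0 (Finsupp.ext fun j => congrFun hc j)
      obtain ⟨i, hi⟩ := hu_surj _ hmem
      refine ⟨i.succ, ?_⟩
      ext j
      rw [hw_apply]
      simp [v, hi]
  -- monomial basis and change-of-basis matrix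
  set g : Fin (m + 1) → MvPolynomial (Fin p) ℂ := fun k => monomial (w k) 1 with hg
  set A : Matrix (Fin (m + 1)) (Fin (m + 1)) ℂ := Matrix.of fun j k => coeff (w k) (f j) with hA
  have hfA : ∀ j, f j = ∑ k, A j k • g k := by
    intro j
    have hterm : ∀ k, A j k • g k = monomial (w k) (coeff (w k) (f j)) := by
      intro k
      rw [hg, hA, smul_monomial]
      simp
    rw [Finset.sum_congr rfl fun k _ => hterm k]
    have himg : (f j).support ⊆ Finset.univ.image w := by
      intro β hβ
      have hdb : (β.sum fun _ e => e) ≤ n := le_trans (le_totalDegree hβ) (hdeg j)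
      obtain ⟨k, hk⟩ := hw_surj β hdb
      exact Finset.mem_image.mpr ⟨k, Finset.mem_univ k, hk⟩
    have h1 : (∑ k, (monomial (w k)) (coeff (w k) (f j)))
        = ∑ β ∈ Finset.univ.image w, monomial β (coeff β (f j)) :=
      (Finset.sum_image (f := fun β => (monomial β) (coeff β (f j)))
        (fun a _ b _ hab => hw_inj hab)).symm
    have h2 : (∑ β ∈ Finset.univ.image w, monomial β (coeff β (f j))) = f j := by
      conv_rhs => rw [(f j).as_sum]
      refine (Finset.sum_subset himg fun β _ hβ => ?_).symm
      rw [notMem_support_iff.mp hβ, map_zero]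
    rw [h1, h2]
  -- matrices of derivatives
  set Mg : Matrix (Fin (m + 1)) (Fin (m + 1)) (MvPolynomial (Fin p) ℂ) :=
    Matrix.of fun i k => mderP (v i) (g k) with hMg
  set Mf : Matrix (Fin (m + 1)) (Fin (m + 1)) (MvPolynomial (Fin p) ℂ) :=
    Matrix.of fun i j => mderP (v i) (f j) with hMfdef
  -- entries of Mg
  have hMg_entry : ∀ i k, Mg i k
      = monomial (w k - w i) ((∏ j, (w k j).descFactorial (w i j) : ℕ) : ℂ) := by
    intro i k
    rw [hMg]
    show mderP (v i) (g k) = _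
    rw [hg]
    show mderP (v i) (monomial (w k) 1) = _
    rw [mderP_monomial, one_mul]
    have e1 : Finsupp.equivFunOnFinite.symm (v i) = w i := rfl
    have e2 : (∏ j, ((w k) j).descFactorial (v i j)) = ∏ j, (w k j).descFactorial (w i j) :=
      Finset.prod_congr rfl fun j _ => by rw [hw_apply, hw_apply]
    rw [e1, e2]
  -- each determinant term of Mg is a constant
  have hterm : ∀ σ : Equiv.Perm (Fin (m + 1)), ∃ t : ℂ,
      (Equiv.Perm.sign σ • ∏ i, Mg (σ i) i) = C t := by
    intro σ
    have hprod : (∏ i, Mg (σ i) i)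
        = monomial (∑ i, (w i - w (σ i)))
            (∏ i, ((∏ j, (w i j).descFactorial (w (σ i) j) : ℕ) : ℂ)) := by
      rw [Finset.prod_congr rfl fun i _ => hMg_entry (σ i) i, prod_monomial]
    by_cases hc : ∀ i, ((∏ j, (w i j).descFactorial (w (σ i) j) : ℕ) : ℂ) ≠ 0
    · have hle : ∀ i j, w (σ i) j ≤ w i j := by
        intro i j
        by_contra hlt
        push_neg at hlt
        refine hc i ?_
        rw [Nat.cast_eq_zero]
        exact Finset.prod_eq_zero (Finset.mem_univ j)
          (Nat.descFactorial_eq_zero_iff_lt.mpr hlt)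
      have hD : (∑ i, (w i - w (σ i))) = 0 := by
        ext j
        rw [Finset.sum_apply']
        rw [Finset.sum_congr rfl fun i _ => (Finsupp.tsub_apply (w i) (w (σ i)) j)]
        rw [Finset.sum_tsub_distrib _ (fun i _ => hle i j)]
        rw [Equiv.sum_comp σ (fun i => w i j)]
        simp
      refine ⟨(Equiv.Perm.sign σ : ℤ) •
        (∏ i, ((∏ j, (w i j).descFactorial (w (σ i) j) : ℕ) : ℂ)), ?_⟩
      rw [hprod, hD, monomial_zero', Units.smul_def, map_zsmul]
    · push_neg at hc
      obtain ⟨i, hi⟩ := hc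
      refine ⟨0, ?_⟩
      rw [hprod, Finset.prod_eq_zero (Finset.mem_univ i) hi, map_zero, map_zero, smul_zero]
  choose t ht using hterm
  have hdetMg : Mg.det = C (∑ σ, t σ) := by
    rw [Matrix.det_apply, Finset.sum_congr rfl fun σ _ => ht σ]
    exact (map_sum C t Finset.univ).symm
  set c₀ : ℂ := ∑ σ, t σ with hc₀def
  -- value at zero
  have heval0 : MvPolynomial.eval (0 : Fin p → ℂ) Mg.det
      = ∏ i, ((∏ j, Nat.factorial (w i j) : ℕ) : ℂ) := by
    rw [RingHom.map_det]
    have hmap : (Mg.map (MvPolynomial.eval (0 : Fin p → ℂ)))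
        = Matrix.diagonal (fun i => ((∏ j, Nat.factorial (w i j) : ℕ) : ℂ)) := by
      ext i k
      rw [Matrix.map_apply, hMg_entry, eval_zero_monomial, Matrix.diagonal_apply]
      by_cases hik : i = k
      · subst hik
        simp [Nat.descFactorial_self]
      · rw [if_neg hik]
        split
        · rename_i hsub
          have hle : w k ≤ w i := tsub_eq_zero_iff_le.mp hsub
          have hne : w k ≠ w i := fun h => hik (hw_inj h).symm
          have hex : ∃ j, w k j < w i j := by
            by_contra hcon
            push_neg at hcon
            refine hne (le_antisymm hle ?_)
            intro j
            exact hcon j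
          obtain ⟨j, hj⟩ := hex
          rw [Nat.cast_eq_zero]
          exact Finset.prod_eq_zero (Finset.mem_univ j)
            (Nat.descFactorial_eq_zero_iff_lt.mpr hj)
        · rfl
    rw [RingHom.mapMatrix_apply, hmap, Matrix.det_diagonal]
  have hc₀ : c₀ ≠ 0 := by
    have h1 : MvPolynomial.eval (0 : Fin p → ℂ) Mg.det = c₀ := by rw [hdetMg, eval_C]
    rw [h1] at heval0
    rw [heval0]
    refine Finset.prod_ne_zero_iff.mpr fun i _ => ?_
    exact Nat.cast_ne_zero.mpr
      (Finset.prod_ne_zero_iff.mpr fun j _ => Nat.factorial_ne_zero _)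
  -- relation between Mf and Mg
  have hMf : Mf = Mg * Matrix.of (fun k j => (C (A j k) : MvPolynomial (Fin p) ℂ)) := by
    refine Matrix.ext fun i j => ?_
    rw [Matrix.mul_apply]
    show mderP (v i) (f j) = _
    rw [hfA j, mderP_sum]
    refine Finset.sum_congr rfl fun k _ => ?_
    rw [mderP_smul]
    show A j k • mderP (v i) (g k) = mderP (v i) (g k) * C (A j k)
    rw [smul_eq_C_mul, mul_comm]
  have hdetB : (Matrix.of (fun k j => (C (A j k) : MvPolynomial (Fin p) ℂ))).det
      = C (A.transpose.det) := by
    rw [RingHom.map_det]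
    rfl
  have hdetMf : Mf.det = C (c₀ * A.transpose.det) := by
    rw [hMf, Matrix.det_mul, hdetMg, hdetB, ← map_mul]
  -- det Aᵀ ≠ 0
  have hdetA : A.transpose.det ≠ 0 := by
    intro hdet0
    obtain ⟨x, hx0, hxv⟩ := Matrix.exists_mulVec_eq_zero_iff.mpr hdet0
    have hxf : ∑ j, x j • f j = 0 := by
      have h1 : ∀ j, x j • f j = ∑ k, (x j * A j k) • g k := by
        intro j
        rw [hfA j, Finset.smul_sum]
        exact Finset.sum_congr rfl fun k _ => by rw [smul_smul]
      rw [Finset.sum_congr rfl fun j _ => h1 j, Finset.sum_comm]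
      refine Finset.sum_eq_zero fun k _ => ?_
      rw [← Finset.sum_smul]
      have h2 : (∑ j, x j * A j k) = 0 := by
        have h3 := congrFun hxv k
        simp only [Matrix.mulVec, dotProduct, Matrix.transpose_apply, Pi.zero_apply] at h3
        rw [← h3]
        exact Finset.sum_congr rfl fun j _ => mul_comm _ _
      rw [h2, zero_smul]
    have hall := Fintype.linearIndependent_iff.mp hindep x hxf
    exact hx0 (funext hall)
  -- conclusion
  refine ⟨c₀ * A.transpose.det, mul_ne_zero hc₀ hdetA, ?_⟩
  intro z
  have hentry : (Matrix.of fun i j =>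
      Fin.cases (MvPolynomial.eval z (f j))
        (fun i' => mpd (u i') (fun w => MvPolynomial.eval w (f j)) z) i)
      = Mf.map (MvPolynomial.eval z) := by
    ext i j
    rw [Matrix.map_apply]
    show (Fin.cases (MvPolynomial.eval z (f j))
        (fun i' => mpd (u i') (fun w => MvPolynomial.eval w (f j)) z) i : ℂ)
      = MvPolynomial.eval z (mderP (v i) (f j))
    induction i using Fin.cases with
    | zero =>
        rw [Fin.cases_zero]
        have hv0 : v 0 = fun _ => 0 := by funext j'; simp [hv]
        rw [hv0, mderP_zero_word]
    | succ i' =>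
        rw [Fin.cases_succ]
        have hvs : v i'.succ = u i' := by funext j'; simp [hv]
        rw [congrFun (mpd_eval (u i') (f j)) z, hvs]
  show (Matrix.of fun i j =>
      Fin.cases (MvPolynomial.eval z (f j))
        (fun i' => mpd (u i') (fun w => MvPolynomial.eval w (f j)) z) i).det
      = c₀ * A.transpose.det
  rw [hentry, ← RingHom.mapMatrix_apply, ← RingHom.map_det, hdetMf, eval_C]
end
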